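/- Let U : Matrix I I ℂ satisfy T · U = U · T, and define f(ρ) = trace(U · ρ · Uᴴ · Z_avg) where Z_avg = (1/n) · Σ_{j ∈ ZMod n} Z j. Then for every ρ : Matrix I I ℂ (not assumed symmetric), f(T · ρ · Tᴴ) = f(ρ). That is, the split-parallelized circuit output is invariant under translation of the input, the T-invariance property of geometric quantum machine learning. -/
import Mathlib


open scoped Matrix


/-- The cyclic shift on computational basis states of `n` qubits:
`shift n x = (i ↦ x (i - 1))`. -/
def shift (n : ℕ) (x : ZMod n → Fin 2) : ZMod n → Fin 2 := fun i => x (i - 1)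

/-- The permutation matrix `T` of the cyclic shift: `T` sends the basis vector labelled `y`
to the one labelled `shift n y`. -/
def Tmat (n : ℕ) [NeZero n] : Matrix (ZMod n → Fin 2) (ZMod n → Fin 2) ℂ :=
  fun x y => if x = shift n y then 1 else 0

/-- The Pauli-Z operator on qubit `j`: diagonal with entries `(-1)^(x j)`. -/
def Zmat (n : ℕ) [NeZero n] (j : ZMod n) : Matrix (ZMod n → Fin 2) (ZMod n → Fin 2) ℂ :=
  Matrix.diagonal fun x => (-1 : ℂ) ^ ((x j : ℕ))

lemma shift_inj (n : ℕ) : Function.Injective (shift n) := by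
  intro a b h
  funext i
  have := congrFun h (i + 1)
  simpa [shift] using this

lemma Tmat_conjTranspose_mul (n : ℕ) [NeZero n] : (Tmat n)ᴴ * Tmat n = 1 := by
  ext x z
  simp only [Matrix.mul_apply, Matrix.conjTranspose_apply, Tmat, Matrix.one_apply]
  rw [Finset.sum_eq_single (shift n x)]
  · by_cases h : x = z
    · simp [h]
    · have : ¬ shift n x = shift n z := fun hc => h (shift_inj n hc)
      simp [h, this]
  · intro y _ hy
    rw [if_neg hy]
    simp
  · simp

lemma Zmat_mul_Tmat (n : ℕ) [NeZero n] (j : ZMod n) :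
    Zmat n j * Tmat n = Tmat n * Zmat n (j - 1) := by
  ext x y
  simp only [Zmat, Tmat, Matrix.diagonal_mul, Matrix.mul_diagonal]
  by_cases h : x = shift n y
  · subst h; simp [shift]
  · simp [h]

lemma sum_Zmat_mul_Tmat (n : ℕ) [NeZero n] :
    (∑ j : ZMod n, Zmat n j) * Tmat n = Tmat n * ∑ j : ZMod n, Zmat n j := by
  rw [Finset.sum_mul, Matrix.mul_sum]
  calc ∑ j : ZMod n, Zmat n j * Tmat n
      = ∑ j : ZMod n, Tmat n * Zmat n (j - 1) := by
        exact Finset.sum_congr rfl fun j _ => Zmat_mul_Tmat n j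
    _ = ∑ j : ZMod n, Tmat n * Zmat n j :=
        Fintype.sum_equiv (Equiv.subRight 1) _ _ (fun j => rfl)

set_option maxHeartbeats 1000000 in
/-- Eq. (7) of the paper: with `f ρ = tr(U ρ Uᴴ Z_avg)` for a translationally symmetric
circuit `U`, the output is invariant under translation of the (arbitrary) input. -/
theorem stmt_13 (n : ℕ) [NeZero n]
    (U : Matrix (ZMod n → Fin 2) (ZMod n → Fin 2) ℂ) (hU : Tmat n * U = U * Tmat n)
    (ρ : Matrix (ZMod n → Fin 2) (ZMod n → Fin 2) ℂ) :
    (U * (Tmat n * ρ * (Tmat n)ᴴ) * Uᴴ * ((1 / (n : ℂ)) • ∑ j : ZMod n, Zmat n j)).trace =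
      (U * ρ * Uᴴ * ((1 / (n : ℂ)) • ∑ j : ZMod n, Zmat n j)).trace := by
  have hST := sum_Zmat_mul_Tmat n
  have hTT := Tmat_conjTranspose_mul n
  set T := Tmat n
  set S := ∑ j : ZMod n, Zmat n j with hS
  have hU' : (T)ᴴ * Uᴴ = Uᴴ * (T)ᴴ := by
    calc Tᴴ * Uᴴ = (U * T)ᴴ := by rw [Matrix.conjTranspose_mul]
    _ = (T * U)ᴴ := by rw [hU]
    _ = Uᴴ * Tᴴ := by rw [Matrix.conjTranspose_mul]
  have key : U * (T * ρ * Tᴴ) * Uᴴ = T * (U * ρ * Uᴴ) * Tᴴ := by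
    calc U * (T * ρ * Tᴴ) * Uᴴ = (U * T) * (ρ * (Tᴴ * Uᴴ)) := by
          simp only [Matrix.mul_assoc]
      _ = (T * U) * (ρ * (Uᴴ * Tᴴ)) := by rw [hU, hU']
      _ = T * (U * ρ * Uᴴ) * Tᴴ := by simp only [Matrix.mul_assoc]
  have h2 : (T * (U * ρ * Uᴴ) * Tᴴ * S).trace = (U * ρ * Uᴴ * S).trace := by
    calc (T * (U * ρ * Uᴴ) * Tᴴ * S).trace
        = (T * ((U * ρ * Uᴴ) * (Tᴴ * S))).trace := by simp only [Matrix.mul_assoc]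
      _ = ((U * ρ * Uᴴ) * (Tᴴ * S) * T).trace := by rw [Matrix.trace_mul_comm]
      _ = ((U * ρ * Uᴴ) * (Tᴴ * (S * T))).trace := by simp only [Matrix.mul_assoc]
      _ = ((U * ρ * Uᴴ) * (Tᴴ * (T * S))).trace := by rw [hST]
      _ = (U * ρ * Uᴴ * S).trace := by
          rw [← Matrix.mul_assoc Tᴴ T S, hTT, Matrix.one_mul]
  rw [key, Matrix.mul_smul, Matrix.mul_smul, Matrix.trace_smul, Matrix.trace_smul, h2]
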